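/- arXiv:2510.24921 — 5 statements merged into one kernel-verified Lean document; each statement's English description precedes it below -/
import Mathlib

section
/- Let P, Q ∈ Mat₂(ℂ[X]) satisfy P² = 0, Q² = 0 and P·Q + Q·P = X·I₂. Then there exists an invertible matrix W ∈ Mat₂(ℂ[X]) such that either W⁻¹·P·W = [[0,1],[0,0]] and W⁻¹·Q·W = [[0,0],[X,0]], or W⁻¹·P·W = [[0,X],[0,0]] and W⁻¹·Q·W = [[0,0],[1,0]]. -/
open Polynomial


private lemma sqz {R : Type*} [CommRing R] [IsDomain R]
    (M : Matrix (Fin 2) (Fin 2) R) (h : M * M = 0) :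
    M 1 1 = -(M 0 0) ∧ M 0 0 * M 0 0 + M 0 1 * M 1 0 = 0 := by
  have e00 := congrFun (congrFun h 0) 0
  have e01 := congrFun (congrFun h 0) 1
  have e10 := congrFun (congrFun h 1) 0
  have e11 := congrFun (congrFun h 1) 1
  simp [Matrix.mul_apply, Fin.sum_univ_two] at e00 e01 e10 e11
  by_cases h0 : M 0 0 + M 1 1 = 0
  · exact ⟨by linear_combination h0, by linear_combination e00⟩
  · exfalso
    have hb : M 0 1 * (M 0 0 + M 1 1) = 0 := by linear_combination e01
    have hc : M 1 0 * (M 0 0 + M 1 1) = 0 := by linear_combination e10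
    have hb0 := (mul_eq_zero.1 hb).resolve_right h0
    have hc0 := (mul_eq_zero.1 hc).resolve_right h0
    apply h0
    have ha : M 0 0 = 0 := mul_self_eq_zero.1 (by rw [hb0] at e00; linear_combination e00)
    have hdd : M 1 1 = 0 := mul_self_eq_zero.1 (by rw [hc0] at e11; linear_combination e11)
    rw [ha, hdd, add_zero]

private lemma myConjMul {R : Type*} [CommRing R] (V W M N : Matrix (Fin 2) (Fin 2) R)
    (h2 : W * V = 1) : (V * M * W) * (V * N * W) = V * (M * N) * W := by
  have h : (V * M * W) * (V * N * W) = V * (M * ((W * V) * (N * W))) := by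
    simp only [mul_assoc]
  rw [h, h2, one_mul]
  simp only [mul_assoc]

private lemma conjChain {R : Type*} [Ring R] (V W M A Ai B Bi : R) :
    (Bi * Ai * V) * M * (W * A * B) = Bi * (Ai * (V * M * W) * A) * B := by
  simp only [mul_assoc]

private lemma tripleInv {R : Type*} [Monoid R] {V W A Ai B Bi : R}
    (h1 : V * W = 1) (hA : Ai * A = 1) (hB : Bi * B = 1) :
    (Bi * Ai * V) * (W * A * B) = 1 := by
  have h : (Bi * Ai * V) * (W * A * B) = Bi * (Ai * ((V * W) * (A * B))) := by
    simp only [mul_assoc]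
  rw [h, h1, one_mul, ← mul_assoc Ai A B, hA, one_mul, hB]

private lemma mat2_ext {R : Type*} [CommRing R] {a b c d e f g h : R}
    (h1 : a = e) (h2 : b = f) (h3 : c = g) (h4 : d = h) :
    !![a, b; c, d] = !![e, f; g, h] := by
  subst h1; subst h2; subst h3; subst h4; rfl

private lemma final (P Q V W₀ : Matrix (Fin 2) (Fin 2) (Polynomial ℂ)) (p : Polynomial ℂ)
    (h1 : V * W₀ = 1) (h2 : W₀ * V = 1)
    (hP' : V * P * W₀ = !![0, p; 0, 0])
    (hQ2 : Q * Q = 0)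
    (hPQ : P * Q + Q * P = (X : Polynomial ℂ) • (1 : Matrix (Fin 2) (Fin 2) (Polynomial ℂ))) :
    ∃ W : Matrix (Fin 2) (Fin 2) (Polynomial ℂ), IsUnit W ∧
      ((W⁻¹ * P * W = !![0, 1; 0, 0] ∧ W⁻¹ * Q * W = !![0, 0; X, 0]) ∨
       (W⁻¹ * P * W = !![0, X; 0, 0] ∧ W⁻¹ * Q * W = !![0, 0; 1, 0])) := by
  have hQsq : (V * Q * W₀) * (V * Q * W₀) = 0 := by
    rw [myConjMul _ _ _ _ h2, hQ2, Matrix.mul_zero, Matrix.zero_mul]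
  obtain ⟨hd, hdet⟩ := sqz _ hQsq
  obtain ⟨a, b, c, hQ'⟩ : ∃ a b c, V * Q * W₀ = !![a, b; c, -a] := by
    refine ⟨(V * Q * W₀) 0 0, (V * Q * W₀) 0 1, (V * Q * W₀) 1 0, ?_⟩
    rw [← hd]
    exact Matrix.etaExpand_eq (V * Q * W₀) ▸ rfl
  rw [hQ'] at hdet
  simp at hdet
  have hdet : a * a + b * c = 0 := by linear_combination hdet
  have hconj : (!![0, p; 0, 0] : Matrix (Fin 2) (Fin 2) (Polynomial ℂ)) * !![a, b; c, -a]
      + !![a, b; c, -a] * !![0, p; 0, 0] = (X : Polynomial ℂ) • 1 := by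
    rw [← hP', ← hQ', myConjMul _ _ _ _ h2, myConjMul _ _ _ _ h2, ← Matrix.add_mul,
      ← Matrix.mul_add, hPQ, Matrix.mul_smul, Matrix.mul_one, Matrix.smul_mul, h1]
  have hpc : p * c = X := by
    have h00 := congrFun (congrFun hconj 0) 0
    simpa [Matrix.mul_apply, Fin.sum_univ_two] using h00
  rcases (Polynomial.prime_X (R := ℂ)).irreducible.isUnit_or_isUnit hpc.symm with hu | hu
  · -- p is a unit
    obtain ⟨u, hup⟩ := hu.exists_right_inv
    have hXa : (X : Polynomial ℂ) ∣ a := by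
      have h2a : (X : Polynomial ℂ) ∣ a * a :=
        ⟨-(b * u), by linear_combination hdet - b * u * hpc + b * c * hup⟩
      rcases (Polynomial.prime_X (R := ℂ)).2.2 _ _ h2a with h | h <;> exact h
    obtain ⟨t, ht⟩ := hXa
    have hSiS : (!![1, -t; 0, 1] : Matrix (Fin 2) (Fin 2) (Polynomial ℂ)) * !![1, t; 0, 1] = 1 := by
      rw [Matrix.one_fin_two, Matrix.mul_fin_two]; apply mat2_ext <;> ring
    have hSSi : (!![1, t; 0, 1] : Matrix (Fin 2) (Fin 2) (Polynomial ℂ)) * !![1, -t; 0, 1] = 1 := by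
      rw [Matrix.one_fin_two, Matrix.mul_fin_two]; apply mat2_ext <;> ring
    have hDiD : (!![u, 0; 0, 1] : Matrix (Fin 2) (Fin 2) (Polynomial ℂ)) * !![p, 0; 0, 1] = 1 := by
      rw [Matrix.one_fin_two, Matrix.mul_fin_two]
      apply mat2_ext <;> first | ring1 | linear_combination hup
    have hDDi : (!![p, 0; 0, 1] : Matrix (Fin 2) (Fin 2) (Polynomial ℂ)) * !![u, 0; 0, 1] = 1 := by
      rw [Matrix.one_fin_two, Matrix.mul_fin_two]
      apply mat2_ext <;> first | ring1 | linear_combination hup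
    have hWiW : (!![1, -t; 0, 1] * !![u, 0; 0, 1] * V) *
        (W₀ * !![p, 0; 0, 1] * !![1, t; 0, 1]) = 1 := tripleInv h1 hDiD hSiS
    have hWWi : (W₀ * !![p, 0; 0, 1] * !![1, t; 0, 1]) *
        (!![1, -t; 0, 1] * !![u, 0; 0, 1] * V) = 1 := tripleInv hSSi hDDi h2
    have hinv : (W₀ * !![p, 0; 0, 1] * !![1, t; 0, 1])⁻¹ =
        !![1, -t; 0, 1] * !![u, 0; 0, 1] * V := Matrix.inv_eq_left_inv hWiW
    refine ⟨W₀ * !![p, 0; 0, 1] * !![1, t; 0, 1], ⟨⟨_, _, hWWi, hWiW⟩, rfl⟩,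
      Or.inl ⟨?_, ?_⟩⟩
    · rw [hinv, conjChain, hP']
      simp only [Matrix.mul_fin_two]
      apply mat2_ext <;> first | ring1 | linear_combination hup
    · rw [hinv, conjChain, hQ']
      simp only [Matrix.mul_fin_two]
      apply mat2_ext
      · linear_combination a * hup - t * hpc + ht
      · apply mul_left_cancel₀ (Polynomial.X_ne_zero (R := ℂ))
        linear_combination hdet + (a * t * X + b * c) * hup +
          (-(t ^ 2) * X - u * b) * hpc + (t * X - a) * ht
      · linear_combination hpc
      · linear_combination t * hpc - ht
  · -- c is a unit
    obtain ⟨u, hcu⟩ := hu.exists_right_inv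
    have hSiS : (!![1, -a; 0, 1] : Matrix (Fin 2) (Fin 2) (Polynomial ℂ)) * !![1, a; 0, 1] = 1 := by
      rw [Matrix.one_fin_two, Matrix.mul_fin_two]; apply mat2_ext <;> ring
    have hSSi : (!![1, a; 0, 1] : Matrix (Fin 2) (Fin 2) (Polynomial ℂ)) * !![1, -a; 0, 1] = 1 := by
      rw [Matrix.one_fin_two, Matrix.mul_fin_two]; apply mat2_ext <;> ring
    have hDiD : (!![1, 0; 0, u] : Matrix (Fin 2) (Fin 2) (Polynomial ℂ)) * !![1, 0; 0, c] = 1 := by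
      rw [Matrix.one_fin_two, Matrix.mul_fin_two]
      apply mat2_ext <;> first | ring1 | linear_combination hcu
    have hDDi : (!![1, 0; 0, c] : Matrix (Fin 2) (Fin 2) (Polynomial ℂ)) * !![1, 0; 0, u] = 1 := by
      rw [Matrix.one_fin_two, Matrix.mul_fin_two]
      apply mat2_ext <;> first | ring1 | linear_combination hcu
    have hWiW : (!![1, -a; 0, 1] * !![1, 0; 0, u] * V) *
        (W₀ * !![1, 0; 0, c] * !![1, a; 0, 1]) = 1 := tripleInv h1 hDiD hSiS
    have hWWi : (W₀ * !![1, 0; 0, c] * !![1, a; 0, 1]) *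
        (!![1, -a; 0, 1] * !![1, 0; 0, u] * V) = 1 := tripleInv hSSi hDDi h2
    have hinv : (W₀ * !![1, 0; 0, c] * !![1, a; 0, 1])⁻¹ =
        !![1, -a; 0, 1] * !![1, 0; 0, u] * V := Matrix.inv_eq_left_inv hWiW
    refine ⟨W₀ * !![1, 0; 0, c] * !![1, a; 0, 1], ⟨⟨_, _, hWWi, hWiW⟩, rfl⟩,
      Or.inr ⟨?_, ?_⟩⟩
    · rw [hinv, conjChain, hP']
      simp only [Matrix.mul_fin_two]
      apply mat2_ext <;> first | ring1 | linear_combination hpc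
    · rw [hinv, conjChain, hQ']
      simp only [Matrix.mul_fin_two]
      apply mat2_ext
      · linear_combination (-a) * hcu
      · linear_combination hdet
      · linear_combination hcu
      · ring

/-- If `P, Q ∈ Mat₂(ℂ[X])` satisfy `P² = 0`, `Q² = 0` and `PQ + QP = X·I₂`, then there is an
invertible `W` conjugating the pair `(P, Q)` to `([[0,1],[0,0]], [[0,0],[X,0]])` or to
`([[0,X],[0,0]], [[0,0],[1,0]])`. -/
theorem stmt_0 (P Q : Matrix (Fin 2) (Fin 2) (Polynomial ℂ))
    (hP : P * P = 0) (hQ : Q * Q = 0)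
    (hPQ : P * Q + Q * P = (X : Polynomial ℂ) • (1 : Matrix (Fin 2) (Fin 2) (Polynomial ℂ))) :
    ∃ W : Matrix (Fin 2) (Fin 2) (Polynomial ℂ), IsUnit W ∧
      ((W⁻¹ * P * W = !![0, 1; 0, 0] ∧ W⁻¹ * Q * W = !![0, 0; X, 0]) ∨
       (W⁻¹ * P * W = !![0, X; 0, 0] ∧ W⁻¹ * Q * W = !![0, 0; 1, 0])) := by
  obtain ⟨hd, hdet⟩ := sqz P hP
  obtain ⟨a, b, c, hP2⟩ : ∃ a b c, P = !![a, b; c, -a] := by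
    refine ⟨P 0 0, P 0 1, P 1 0, ?_⟩
    rw [← hd]
    exact Matrix.etaExpand_eq P ▸ rfl
  rw [hP2] at hdet
  simp at hdet
  have hdet : a * a + b * c = 0 := by linear_combination hdet
  by_cases hab : a = 0 ∧ b = 0
  · obtain ⟨ha, hb⟩ := hab
    have h1 : (!![0, 1; -1, 0] : Matrix (Fin 2) (Fin 2) (Polynomial ℂ)) * !![0, -1; 1, 0] = 1 := by
      rw [Matrix.one_fin_two, Matrix.mul_fin_two]; apply mat2_ext <;> ring1
    have h2 : (!![0, -1; 1, 0] : Matrix (Fin 2) (Fin 2) (Polynomial ℂ)) * !![0, 1; -1, 0] = 1 := by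
      rw [Matrix.one_fin_two, Matrix.mul_fin_two]; apply mat2_ext <;> ring1
    have hP' : !![0, 1; -1, 0] * P * !![0, -1; 1, 0] = !![0, -c; 0, 0] := by
      rw [hP2]; simp only [Matrix.mul_fin_two]
      apply mat2_ext <;> first | ring1 | linear_combination ha | linear_combination -ha |
        linear_combination -hb
    exact final P Q _ _ _ h1 h2 hP' hQ hPQ
  · set g := EuclideanDomain.gcd a b with hgdef
    have hg : g ≠ 0 := fun h => hab (EuclideanDomain.gcd_eq_zero_iff.mp h)
    obtain ⟨a₀, ha₀⟩ : g ∣ a := EuclideanDomain.gcd_dvd_left a b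
    obtain ⟨b₀, hb₀⟩ : g ∣ b := EuclideanDomain.gcd_dvd_right a b
    set A' := EuclideanDomain.gcdA a b with hA
    set B' := EuclideanDomain.gcdB a b with hB
    have hbez' : g = a * A' + b * B' := EuclideanDomain.gcd_eq_gcd_ab a b
    have hbez : a₀ * A' + b₀ * B' = 1 := by
      apply mul_left_cancel₀ hg
      linear_combination (-A') * ha₀ + (-B') * hb₀ - hbez'
    have h1 : (!![B', -A'; a₀, b₀] : Matrix (Fin 2) (Fin 2) (Polynomial ℂ)) *
        !![b₀, A'; -a₀, B'] = 1 := by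
      rw [Matrix.one_fin_two, Matrix.mul_fin_two]
      apply mat2_ext <;> first | ring1 | linear_combination hbez
    have h2 : (!![b₀, A'; -a₀, B'] : Matrix (Fin 2) (Fin 2) (Polynomial ℂ)) *
        !![B', -A'; a₀, b₀] = 1 := by
      rw [Matrix.one_fin_two, Matrix.mul_fin_two]
      apply mat2_ext <;> first | ring1 | linear_combination hbez
    have hP' : !![B', -A'; a₀, b₀] * P * !![b₀, A'; -a₀, B'] =
        !![0, (B' * a + (-A') * c) * A' + (B' * b + (-A') * (-a)) * B'; 0, 0] := by
      rw [hP2]; simp only [Matrix.mul_fin_two]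
      apply mat2_ext
      · apply mul_left_cancel₀ hg
        linear_combination (-B' * a + A' * c) * hb₀ + (B' * b + A' * a) * ha₀ - A' * hdet
      · ring1
      · apply mul_left_cancel₀ hg
        apply mul_left_cancel₀ hg
        linear_combination b * hdet +
          (-2 * a ^ 2 - 2 * b * c + c * (b - g * b₀) + 2 * a * (a - g * a₀)) * hb₀ +
          (-(b * (a - g * a₀))) * ha₀
      · apply mul_left_cancel₀ hg
        linear_combination A' * hdet - (A' * a + B' * b) * ha₀ - (A' * c - B' * a) * hb₀
    exact final P Q _ _ _ h1 h2 hP' hQ hPQ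
end

section
/- There is no invertible matrix W ∈ Mat₂(ℂ[X]) such that W⁻¹·[[0,1],[0,0]]·W = [[0,X],[0,0]] and W⁻¹·[[0,0],[X,0]]·W = [[0,0],[1,0]]. In other words, the pairs ([[0,1],[0,0]], [[0,0],[X,0]]) and ([[0,X],[0,0]], [[0,0],[1,0]]) lie in distinct orbits under simultaneous conjugation by invertible matrices over ℂ[X]. -/
open Polynomial

/-- The pairs `([[0,1],[0,0]], [[0,0],[X,0]])` and `([[0,X],[0,0]], [[0,0],[1,0]])` in
`Mat₂(ℂ[X])` lie in distinct orbits under simultaneous conjugation by invertible matrices. -/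
theorem stmt_1 :
    ¬ ∃ W : Matrix (Fin 2) (Fin 2) (Polynomial ℂ), IsUnit W ∧
      W⁻¹ * !![0, 1; 0, 0] * W = !![0, X; 0, 0] ∧
      W⁻¹ * !![0, 0; X, 0] * W = !![0, 0; 1, 0] := by
  rintro ⟨W, hU, h1, h2⟩
  have hdet : IsUnit W.det := (Matrix.isUnit_iff_isUnit_det W).mp hU
  have hWW : W * W⁻¹ = 1 := Matrix.mul_nonsing_inv W hdet
  have h1' : !![(0:ℂ[X]), 1; 0, 0] * W = W * !![0, X; 0, 0] := by
    have := congrArg (W * ·) h1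
    simpa [← Matrix.mul_assoc, hWW] using this
  have h2' : !![(0:ℂ[X]), 0; X, 0] * W = W * !![0, 0; 1, 0] := by
    have := congrArg (W * ·) h2
    simpa [← Matrix.mul_assoc, hWW] using this
  -- extract entry equations
  have e10 : W 1 0 = 0 := by
    have := congrFun (congrFun h1' 0) 0
    simpa [Matrix.mul_apply, Fin.sum_univ_succ] using this
  have e11 : W 1 1 = W 0 0 * X := by
    have := congrFun (congrFun h1' 0) 1
    simpa [Matrix.mul_apply, Fin.sum_univ_succ] using this
  have e01 : W 0 1 = 0 := by
    have := congrFun (congrFun h2' 1) 0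
    have h := congrFun (congrFun h2' 0) 0
    simpa [Matrix.mul_apply, Fin.sum_univ_succ, eq_comm] using h
  have hdetval : W.det = W 0 0 * W 0 0 * X := by
    rw [Matrix.det_fin_two, e10, e11, e01]
    ring
  rw [hdetval] at hdet
  exact Polynomial.not_isUnit_X (isUnit_of_mul_isUnit_right hdet)
end

section
/- Let A := [[0,1],[0,0]] and B := [[0,0],[X,0]] in Mat₂(ℂ[X]). If N is a ℂ[X]-submodule of ℂ[X]² (column vectors) such that A·v ∈ N and B·v ∈ N for every v ∈ N, then there exists an ideal J of ℂ[X] with N = {(p,q) : p ∈ J, q ∈ J} or N = {(p, X·q) : p ∈ J, q ∈ J}. Likewise, if N is a ℂ[X]-submodule of ℂ[X]² invariant under A' := [[0,X],[0,0]] and B' := [[0,0],[1,0]], then there exists an ideal J of ℂ[X] with N = {(p,q) : p ∈ J, q ∈ J} or N = {(X·p, q) : p ∈ J, q ∈ J}. -/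
/-!
Write `J` and `I` for the images of `N` under the two coordinate projections. The two
nilpotent operators give `X • J ≤ I ≤ J`, and since `X` is irreducible in the principal ideal
domain `ℂ[X]`, an ideal squeezed between `X • J` and `J` is one of the two ends. In either case
every `(0, q)` with `q ∈ I` lies in `N`, which forces `N = J × I`. The second statement is the
first one with the two coordinates exchanged.
-/

open Polynomial Matrix

theorem Ideal.eq_or_eq_span_singleton_mul_of_le {R : Type*} [CommRing R] [IsDomain R]
    [IsPrincipalIdealRing R] {p : R} (hp : Irreducible p) {I J : Ideal R}
    (hpJ : Ideal.span {p} * J ≤ I) (hIJ : I ≤ J) : I = J ∨ I = Ideal.span {p} * J := by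
  obtain ⟨f, rfl⟩ : ∃ f, J = Ideal.span {f} :=
    ⟨_, (Ideal.span_singleton_generator J).symm⟩
  obtain ⟨g, rfl⟩ : ∃ g, I = Ideal.span {g} :=
    ⟨_, (Ideal.span_singleton_generator I).symm⟩
  rw [Ideal.span_singleton_mul_span_singleton] at hpJ ⊢
  rw [Ideal.span_singleton_le_span_singleton] at hpJ hIJ
  simp only [Ideal.span_singleton_eq_span_singleton]
  obtain ⟨h, rfl⟩ := hIJ
  rcases eq_or_ne f 0 with rfl | hf
  · simp
  rw [mul_comm p, mul_dvd_mul_iff_left hf] at hpJ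
  rcases hp.dvd_iff.mp hpJ with hu | hph
  · exact .inl (associated_mul_unit_left f h hu)
  · exact .inr (mul_comm f p ▸ (hph.mul_left f).symm)

theorem Matrix.strictUpper_fin_two_mulVec {R : Type*} [Semiring R] (a : R) (v : Fin 2 → R) :
    !![0, a; 0, 0] *ᵥ v = Pi.single 0 (a * v 1) := by
  funext k; fin_cases k <;> simp [vecHead, vecTail]

theorem Matrix.strictLower_fin_two_mulVec {R : Type*} [Semiring R] (a : R) (v : Fin 2 → R) :
    !![0, 0; a, 0] *ᵥ v = Pi.single 1 (a * v 0) := by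
  funext k; fin_cases k <;> simp [vecHead, vecTail]

theorem Submodule.coe_eq_setOf_mem_map_proj {R M : Type*} [Ring R] [AddCommGroup M] [Module R M]
    {N : Submodule R (Fin 2 → M)} {i j : Fin 2} (hij : i ≠ j)
    (hN : ∀ q ∈ N.map (LinearMap.proj j), Pi.single j q ∈ N) :
    (N : Set (Fin 2 → M)) =
      {v | v i ∈ N.map (LinearMap.proj i) ∧ v j ∈ N.map (LinearMap.proj j)} := by
  ext w
  refine ⟨fun hw => ⟨⟨w, hw, rfl⟩, ⟨w, hw, rfl⟩⟩, ?_⟩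
  rintro ⟨⟨v, hv, hvw⟩, hwj⟩
  have hvj : v j ∈ N.map (LinearMap.proj j) := ⟨v, hv, rfl⟩
  have hw : w = v + Pi.single j (w j - v j) := by
    funext k
    rcases eq_or_ne k j with rfl | hkj
    · simp
    · obtain rfl : k = i := by omega
      simpa [hkj] using hvw.symm
  rw [SetLike.mem_coe, hw]
  exact N.add_mem hv (hN _ (sub_mem hwj hvj))

theorem Submodule.exists_ideal_of_single_mem {R : Type*} [CommRing R] [IsDomain R]
    [IsPrincipalIdealRing R] {N : Submodule R (Fin 2 → R)} {i j : Fin 2} (hij : i ≠ j) {p : R} (hp : Irreducible p) (hA : ∀ v ∈ N, Pi.single i (v j) ∈ N)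
    (hB : ∀ v ∈ N, Pi.single j (p * v i) ∈ N) :
    ∃ J : Ideal R, (N : Set (Fin 2 → R)) = {v | v i ∈ J ∧ v j ∈ J} ∨
      (N : Set (Fin 2 → R)) = {v | v i ∈ J ∧ v j ∈ Ideal.span {p} * J} := by
  set J : Ideal R := N.map (LinearMap.proj i)
  set I : Ideal R := N.map (LinearMap.proj j)
  have hIJ : I ≤ J := by
    rintro _ ⟨v, hv, rfl⟩
    exact ⟨_, hA v hv, Pi.single_eq_same _ _⟩
  have hpJ : Ideal.span {p} * J ≤ I := by
    refine Ideal.span_singleton_mul_le_iff.mpr ?_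
    rintro _ ⟨v, hv, rfl⟩
    exact ⟨_, hB v hv, Pi.single_eq_same _ _⟩
  have hN : (∀ q ∈ I, Pi.single j q ∈ N) → (N : Set (Fin 2 → R)) = {v | v i ∈ J ∧ v j ∈ I} :=
    Submodule.coe_eq_setOf_mem_map_proj hij
  refine ⟨J, ?_⟩
  rcases Ideal.eq_or_eq_span_singleton_mul_of_le hp hpJ hIJ with hI | hI
  · left
    rw [hN ?_, hI]
    rintro _ ⟨v, hv, rfl⟩
    obtain ⟨u, hu, hui⟩ : v i ∈ I := hI ▸ ⟨v, hv, rfl⟩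
    have hvi : Pi.single i (v i) ∈ N := hui ▸ hA u hu
    have hv' : Pi.single j (v j) = v - Pi.single i (v i) := by
      funext k
      rcases eq_or_ne k j with rfl | hkj
      · simp [hij.symm]
      · obtain rfl : k = i := by omega
        simp [hij]
    simpa [hv'] using N.sub_mem hv hvi
  · right
    rw [hN ?_, hI]
    intro q hq
    rw [hI, Ideal.mem_span_singleton_mul] at hq
    obtain ⟨_, ⟨v, hv, rfl⟩, rfl⟩ := hq
    exact hB v hv

/-- Submodules of `ℂ[X]²` invariant under `A = [[0,1],[0,0]]` and `B = [[0,0],[X,0]]` are of the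
form `J ⊕ J` or `J ⊕ XJ` for an ideal `J ⊆ ℂ[X]`; likewise, submodules invariant under
`A' = [[0,X],[0,0]]` and `B' = [[0,0],[1,0]]` are of the form `J ⊕ J` or `XJ ⊕ J`. -/
theorem stmt_4 :
    (∀ N : Submodule (Polynomial ℂ) (Fin 2 → Polynomial ℂ),
      (∀ v ∈ N, (!![0, 1; 0, 0] : Matrix (Fin 2) (Fin 2) (Polynomial ℂ)).mulVec v ∈ N) →
      (∀ v ∈ N, (!![0, 0; X, 0] : Matrix (Fin 2) (Fin 2) (Polynomial ℂ)).mulVec v ∈ N) →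
      ∃ J : Ideal (Polynomial ℂ),
        (N : Set (Fin 2 → Polynomial ℂ)) = {v | v 0 ∈ J ∧ v 1 ∈ J} ∨
        (N : Set (Fin 2 → Polynomial ℂ)) = {v | v 0 ∈ J ∧ ∃ q ∈ J, v 1 = X * q}) ∧
    (∀ N : Submodule (Polynomial ℂ) (Fin 2 → Polynomial ℂ),
      (∀ v ∈ N, (!![0, X; 0, 0] : Matrix (Fin 2) (Fin 2) (Polynomial ℂ)).mulVec v ∈ N) →
      (∀ v ∈ N, (!![0, 0; 1, 0] : Matrix (Fin 2) (Fin 2) (Polynomial ℂ)).mulVec v ∈ N) →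
      ∃ J : Ideal (Polynomial ℂ),
        (N : Set (Fin 2 → Polynomial ℂ)) = {v | v 0 ∈ J ∧ v 1 ∈ J} ∨
        (N : Set (Fin 2 → Polynomial ℂ)) = {v | (∃ p ∈ J, v 0 = X * p) ∧ v 1 ∈ J}) := by
  refine ⟨fun N hA hB => ?_, fun N hA hB => ?_⟩
  · obtain ⟨J, hJ | hJ⟩ := N.exists_ideal_of_single_mem (i := 0) (j := 1) (by decide) irreducible_X
      (fun v hv => by simpa only [strictUpper_fin_two_mulVec, one_mul] using hA v hv)
      (fun v hv => by simpa only [strictLower_fin_two_mulVec] using hB v hv)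
    · exact ⟨J, .inl hJ⟩
    · refine ⟨J, .inr (hJ.trans ?_)⟩
      simp only [Ideal.mem_span_singleton_mul, eq_comm]
  · obtain ⟨J, hJ | hJ⟩ := N.exists_ideal_of_single_mem (i := 1) (j := 0) (by decide) irreducible_X
      (fun v hv => by simpa only [strictLower_fin_two_mulVec, one_mul] using hB v hv)
      (fun v hv => by simpa only [strictUpper_fin_two_mulVec] using hA v hv)
    · exact ⟨J, .inl (hJ.trans (by simp only [and_comm]))⟩
    · refine ⟨J, .inr (hJ.trans ?_)⟩
      simp only [Ideal.mem_span_singleton_mul, eq_comm, and_comm]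
end

section
/- A matrix P ∈ Mat₂(R[h]) satisfies P·Δ⁻¹(P) = 0 if and only if there exist θ, α, β ∈ R[h] with α and β relatively prime (every common divisor of α and β is a unit) such that P = θ·[[β·Δ(α), −α·Δ(α)],[β·Δ(β), −α·Δ(β)]]. -/
open MvPolynomial

/-- The shift automorphism of `R[h₁,…]` sending `h_i ↦ h_i + c i`. -/
noncomputable def shiftAut {R : Type*} [CommRing R] {ι : Type*} (c : ι → R) :
    MvPolynomial ι R ≃ₐ[R] MvPolynomial ι R :=
  AlgEquiv.ofAlgHom
    (aeval fun i => X i + C (c i))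
    (aeval fun i => X i - C (c i))
    (by ext i : 1; simp)
    (by ext i : 1; simp)

/-- The automorphism `Δ` of `R[h₁,…,h_m]` with `Δ(h_i) = h_i - 1` for all `i`. -/
noncomputable def Del (R : Type*) [CommRing R] (m : ℕ) :
    MvPolynomial (Fin m) R ≃ₐ[R] MvPolynomial (Fin m) R :=
  shiftAut (fun _ : Fin m => (-1 : R))

private lemma aux_relprime_map {R S : Type*} [CommSemiring R] [CommRing S] [Algebra R S]
    (e : S ≃ₐ[R] S) {x y : S} (h : IsRelPrime x y) : IsRelPrime (e x) (e y) := by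
  intro z hz1 hz2
  have h1 : e.symm z ∣ x := by
    have := map_dvd e.symm hz1
    rwa [e.symm_apply_apply] at this
  have h2 : e.symm z ∣ y := by
    have := map_dvd e.symm hz2
    rwa [e.symm_apply_apply] at this
  have := (h h1 h2).map e
  rwa [e.apply_symm_apply] at this

private lemma aux_factor {S : Type*} [CommRing S] [IsDomain S] [UniqueFactorizationMonoid S]
    {a b c d : S} (hdet : a * d = b * c) (h : a ≠ 0 ∨ b ≠ 0) :
    ∃ u₀ u₁ w₀ w₁ : S, IsRelPrime w₀ w₁ ∧
      a = u₀ * w₀ ∧ b = u₀ * w₁ ∧ c = u₁ * w₀ ∧ d = u₁ * w₁ := by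
  classical
  letI := UniqueFactorizationMonoid.toGCDMonoid S
  obtain ⟨a', b', ha, hb, hu⟩ := extract_gcd a b
  have hg : gcd a b ≠ 0 := by
    intro hz
    obtain ⟨h1, h2⟩ := (gcd_eq_zero_iff a b).1 hz
    tauto
  have hrel : IsRelPrime a' b' := fun x hx hy => isUnit_of_dvd_unit (dvd_gcd hx hy) hu
  have key : a' * d = b' * c := by
    apply mul_left_cancel₀ hg
    linear_combination hdet - d * ha + c * hb
  by_cases hb' : b' = 0
  · subst hb'
    have hau : IsUnit a' := hrel dvd_rfl (dvd_zero _)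
    have ha0 : a' ≠ 0 := hau.ne_zero
    obtain ⟨r, hr⟩ := hau.exists_right_inv
    have hd0 : d = 0 := by
      have : a' * d = 0 := by rw [key]; ring
      exact (mul_eq_zero.1 this).resolve_left ha0
    refine ⟨gcd a b, c * r, a', 0, hrel, ha, hb, ?_, by rw [hd0, mul_zero]⟩
    calc c = c * (a' * r) := by rw [hr, mul_one]
    _ = c * r * a' := by ring
  · have hdvd : b' ∣ d := by
      refine (hrel.symm.dvd_of_dvd_mul_right (y := d) (z := a')) ⟨c, ?_⟩
      rw [← key]; ring
    obtain ⟨s, hs⟩ := hdvd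
    have hc : c = s * a' := by
      apply mul_left_cancel₀ hb'
      calc b' * c = a' * d := key.symm
      _ = a' * (b' * s) := by rw [hs]
      _ = b' * (s * a') := by ring
    exact ⟨gcd a b, s, a', b', hrel, ha, hb, hc, by rw [hs]; ring⟩

/-- `P ∈ Mat₂(R[h])` satisfies `P·Δ⁻¹(P) = 0` iff
`P = θ·[[β·Δ(α), −α·Δ(α)],[β·Δ(β), −α·Δ(β)]]` with `gcd(α,β) = 1`. -/
theorem stmt_5 {R : Type*} [CommRing R] [IsDomain R] [UniqueFactorizationMonoid R]
    (m : ℕ) (hm : 1 ≤ m)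
    (P : Matrix (Fin 2) (Fin 2) (MvPolynomial (Fin m) R)) :
    P * P.map ⇑(Del R m).symm = 0 ↔
      ∃ θ α β : MvPolynomial (Fin m) R, IsRelPrime α β ∧
        P = θ • !![β * Del R m α, -(α * Del R m α); β * Del R m β, -(α * Del R m β)] := by
  constructor
  · intro hP
    by_cases hP0 : P = 0
    · exact ⟨0, 1, 0, isRelPrime_one_left, by simp [hP0]⟩
    have hσinj : Function.Injective ⇑(Del R m).symm := (Del R m).symm.injective
    have hσne : ∀ x : MvPolynomial (Fin m) R, x ≠ 0 → (Del R m).symm x ≠ 0 := by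
      intro x hx h
      exact hx (hσinj (h.trans (map_zero _).symm))
    have hτne : ∀ x : MvPolynomial (Fin m) R, x ≠ 0 → Del R m x ≠ 0 := by
      intro x hx h
      exact hx ((Del R m).injective (h.trans (map_zero _).symm))
    -- determinant is zero
    have hdet : P.det = 0 := by
      have h1 : (P * P.map ⇑(Del R m).symm).det = 0 := by rw [hP]; simp
      have h2 := AlgEquiv.map_det (Del R m).symm P
      rw [AlgEquiv.mapMatrix_apply] at h2
      rw [Matrix.det_mul, ← h2] at h1
      rcases mul_eq_zero.1 h1 with h | h
      · exact h
      · exact hσinj (h.trans (map_zero _).symm)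
    rw [Matrix.det_fin_two] at hdet
    have hdet' : P 0 0 * P 1 1 = P 0 1 * P 1 0 := sub_eq_zero.mp hdet
    -- entry equations
    have hentry : ∀ i j : Fin 2,
        P i 0 * (Del R m).symm (P 0 j) + P i 1 * (Del R m).symm (P 1 j) = 0 := by
      intro i j
      have := Matrix.ext_iff.mpr hP i j
      simpa [Matrix.mul_apply, Fin.sum_univ_two, Matrix.map_apply] using this
    -- rank-one factorization
    obtain ⟨u₀, u₁, w₀, w₁, hrel, h00, h01, h10, h11⟩ :
        ∃ u₀ u₁ w₀ w₁, IsRelPrime w₀ w₁ ∧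
          P 0 0 = u₀ * w₀ ∧ P 0 1 = u₀ * w₁ ∧ P 1 0 = u₁ * w₀ ∧ P 1 1 = u₁ * w₁ := by
      by_cases hrow : P 0 0 ≠ 0 ∨ P 0 1 ≠ 0
      · exact aux_factor hdet' hrow
      · push_neg at hrow
        obtain ⟨e0, e1⟩ := hrow
        have hrow2 : P 1 0 ≠ 0 ∨ P 1 1 ≠ 0 := by
          by_contra hcon
          push_neg at hcon
          apply hP0
          refine Matrix.ext ?_
          intro i j
          fin_cases i <;> fin_cases j <;>
            simp [e0, e1, hcon.1, hcon.2]
        obtain ⟨t, g, w₀, w₁, hrel, k10, k11, k00, k01⟩ :=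
          aux_factor (show P 1 0 * P 0 1 = P 1 1 * P 0 0 by
            rw [e0, e1]; ring) hrow2
        exact ⟨g, t, w₀, w₁, hrel, k00, k01, k10, k11⟩
    have hw : w₀ ≠ 0 ∨ w₁ ≠ 0 := by
      by_contra hcon
      push_neg at hcon
      obtain ⟨rfl, rfl⟩ := hcon
      exact not_isUnit_zero (hrel dvd_rfl dvd_rfl)
    -- scalar relation
    have hs : w₀ * (Del R m).symm u₀ + w₁ * (Del R m).symm u₁ = 0 := by
      by_contra hs0
      have f00 : u₀ * (Del R m).symm w₀ *
          (w₀ * (Del R m).symm u₀ + w₁ * (Del R m).symm u₁) = 0 := by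
        have := hentry 0 0
        rw [h00, h01, h10] at this
        simp only [map_mul] at this
        linear_combination this
      have f01 : u₀ * (Del R m).symm w₁ *
          (w₀ * (Del R m).symm u₀ + w₁ * (Del R m).symm u₁) = 0 := by
        have h2 := hentry 0 1
        rw [h00, h01, h11] at h2
        simp only [map_mul] at h2
        linear_combination h2
      have f10 : u₁ * (Del R m).symm w₀ *
          (w₀ * (Del R m).symm u₀ + w₁ * (Del R m).symm u₁) = 0 := by
        have h2 := hentry 1 0
        rw [h00, h10, h11] at h2
        simp only [map_mul] at h2
        linear_combination h2
      have f11 : u₁ * (Del R m).symm w₁ *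
          (w₀ * (Del R m).symm u₀ + w₁ * (Del R m).symm u₁) = 0 := by
        have h2 := hentry 1 1
        rw [h01, h10, h11] at h2
        simp only [map_mul] at h2
        linear_combination h2
      have hu0 : u₀ = 0 ∧ u₁ = 0 := by
        rcases hw with h | h
        · have hne := hσne _ h
          constructor
          · rcases mul_eq_zero.1 f00 with h1 | h1
            · exact (mul_eq_zero.1 h1).resolve_right hne
            · exact absurd h1 hs0
          · rcases mul_eq_zero.1 f10 with h1 | h1
            · exact (mul_eq_zero.1 h1).resolve_right hne
            · exact absurd h1 hs0
        · have hne := hσne _ h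
          constructor
          · rcases mul_eq_zero.1 f01 with h1 | h1
            · exact (mul_eq_zero.1 h1).resolve_right hne
            · exact absurd h1 hs0
          · rcases mul_eq_zero.1 f11 with h1 | h1
            · exact (mul_eq_zero.1 h1).resolve_right hne
            · exact absurd h1 hs0
      apply hP0
      refine Matrix.ext ?_
      intro i j
      fin_cases i <;> fin_cases j <;>
        simp [h00, h01, h10, h11, hu0.1, hu0.2]
    -- transport relation through Del
    have hrel2 : Del R m w₀ * u₀ + Del R m w₁ * u₁ = 0 := by
      have := congrArg (Del R m) hs
      simpa [map_add, map_mul, AlgEquiv.apply_symm_apply] using this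
    by_cases hw1 : w₁ = 0
    · subst hw1
      have hau : IsUnit w₀ := hrel dvd_rfl (dvd_zero _)
      have hw0 : w₀ ≠ 0 := hau.ne_zero
      have hu0 : u₀ = 0 := by
        have : Del R m w₀ * u₀ = 0 := by
          have := hrel2
          simp only [map_zero, zero_mul, add_zero] at this
          exact this
        exact (mul_eq_zero.1 this).resolve_left (hτne _ hw0)
      obtain ⟨r, hr⟩ := (hau.map (Del R m)).exists_right_inv
      refine ⟨u₁ * r, 0, w₀, hrel.symm, ?_⟩
      refine Matrix.ext ?_
      intro i j
      fin_cases i <;> fin_cases j <;>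
        simp [h00, h01, h10, h11, hu0, Matrix.smul_apply, smul_eq_mul] <;>
        linear_combination (-(u₁ * w₀)) * hr
    · have hτα : Del R m (-w₁) ≠ 0 := hτne _ (neg_ne_zero.mpr hw1)
      have hrp : IsRelPrime (Del R m (-w₁)) (Del R m w₀) :=
        aux_relprime_map (Del R m) hrel.symm.neg_left
      have hdvd : Del R m (-w₁) ∣ u₀ * Del R m w₀ := by
        refine ⟨u₁, ?_⟩
        rw [map_neg]
        linear_combination hrel2
      obtain ⟨θ, hθ⟩ := hrp.dvd_of_dvd_mul_right hdvd
      have hu1 : u₁ = θ * Del R m w₀ := by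
        apply mul_left_cancel₀ hτα
        rw [map_neg] at hθ ⊢
        linear_combination -hrel2 + Del R m w₀ * hθ
      refine ⟨θ, -w₁, w₀, hrel.symm.neg_left, ?_⟩
      refine Matrix.ext ?_
      intro i j
      fin_cases i <;> fin_cases j <;>
        simp [h00, h01, h10, h11, hθ, hu1, map_neg, Matrix.smul_apply, smul_eq_mul] <;>
        ring
  · rintro ⟨θ, α, β, -, rfl⟩
    refine Matrix.ext ?_
    intro i j
    fin_cases i <;> fin_cases j <;>
      simp [Matrix.mul_apply, Fin.sum_univ_two, Matrix.map_apply, Matrix.smul_apply,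
        smul_eq_mul, map_mul, map_neg, AlgEquiv.symm_apply_apply] <;>
      ring
end

section
/- A matrix Q ∈ Mat₂(R[h]) satisfies Q·Δ(Q) = 0 if and only if there exist ω, γ, δ ∈ R[h] with γ and δ relatively prime (every common divisor of γ and δ is a unit) such that Q = ω·[[γ·Δ⁻¹(δ), −δ·Δ⁻¹(δ)],[γ·Δ⁻¹(γ), −δ·Δ⁻¹(γ)]]. -/
open MvPolynomial

/-- `Q ∈ Mat₂(R[h])` satisfies `Q·Δ(Q) = 0` iff
`Q = ω·[[γ·Δ⁻¹(δ), −δ·Δ⁻¹(δ)],[γ·Δ⁻¹(γ), −δ·Δ⁻¹(γ)]]` with `gcd(γ,δ) = 1`. -/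
theorem stmt_6 {R : Type*} [CommRing R] [IsDomain R] [UniqueFactorizationMonoid R]
    (m : ℕ) (hm : 1 ≤ m)
    (Q : Matrix (Fin 2) (Fin 2) (MvPolynomial (Fin m) R)) :
    Q * Q.map ⇑(Del R m) = 0 ↔
      ∃ ω γ δ : MvPolynomial (Fin m) R, IsRelPrime γ δ ∧
        Q = ω • !![γ * (Del R m).symm δ, -(δ * (Del R m).symm δ);
                   γ * (Del R m).symm γ, -(δ * (Del R m).symm γ)] := by
  set f := Del R m with hfdef
  constructor
  · intro hQ
    have hent : ∀ i j : Fin 2, Q i 0 * f (Q 0 j) + Q i 1 * f (Q 1 j) = 0 := by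
      intro i j
      have h := congrFun (congrFun hQ i) j
      simpa [Matrix.mul_apply, Fin.sum_univ_two, Matrix.map_apply] using h
    by_cases hAB : Q 0 0 = 0 ∧ Q 0 1 = 0
    · have hD : Q 1 1 = 0 := by
        have h : Q 1 1 * f (Q 1 1) = 0 := by simpa [hAB.2] using hent 1 1
        rcases mul_eq_zero.mp h with h | h
        · exact h
        · exact f.injective (h.trans (map_zero f).symm)
      refine ⟨Q 1 0, 1, 0, isRelPrime_one_left, ?_⟩
      apply Matrix.ext; intro i j
      fin_cases i <;> fin_cases j <;>
        simp [hAB.1, hAB.2, hD]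
    · obtain ⟨p, q, g, hpq, hgp, hgq⟩ :
          ∃ p q g, IsRelPrime p q ∧ g * p = Q 0 0 ∧ g * q = Q 0 1 := by
        rcases not_and_or.mp hAB with hA | hB
        · obtain ⟨p, q, g, h1, h2, h3⟩ :=
            UniqueFactorizationMonoid.exists_reduced_factors (Q 0 0) hA (Q 0 1)
          exact ⟨p, q, g, h1, h2, h3⟩
        · obtain ⟨p, q, g, h1, h2, h3⟩ :=
            UniqueFactorizationMonoid.exists_reduced_factors' (Q 0 0) (Q 0 1) hB
          exact ⟨p, q, g, h1, h2, h3⟩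
      have hg : g ≠ 0 := by
        rintro rfl
        rw [zero_mul] at hgp hgq
        exact hAB ⟨hgp.symm, hgq.symm⟩
      have hq0 : q ≠ 0 := by
        rintro rfl
        have hB : Q 0 1 = 0 := by rw [← hgq, mul_zero]
        have hA : Q 0 0 ≠ 0 := fun h => hAB ⟨h, hB⟩
        have e1 : Q 0 0 * f (Q 0 0) = 0 := by simpa [hB] using hent 0 0
        rcases mul_eq_zero.mp e1 with h | h
        · exact hA h
        · exact hA (f.injective (h.trans (map_zero f).symm))
      have hfq0 : f.symm q ≠ 0 := fun h => hq0 (by simpa using congrArg f h)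
      have hrp : IsRelPrime (f.symm q) (f.symm p) := by
        intro d hd1 hd2
        have h1 : f d ∣ q := by simpa using map_dvd f hd1
        have h2 : f d ∣ p := by simpa using map_dvd f hd2
        have hu := hpq.symm h1 h2
        simpa using hu.map f.symm
      have step : ∀ U V : MvPolynomial (Fin m) R, p * f U + q * f V = 0 →
          ∃ k, U = f.symm q * k ∧ V = -(f.symm p * k) := by
        intro U V h
        have h' : f.symm p * U + f.symm q * V = 0 := by
          have h2 := congrArg f.symm h
          simpa [map_add, map_mul] using h2
        have hdvd : f.symm q ∣ f.symm p * U := ⟨-V, by linear_combination h'⟩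
        obtain ⟨k, hk⟩ := hrp.dvd_of_dvd_mul_left hdvd
        refine ⟨k, hk, ?_⟩
        rw [hk] at h'
        have hz : f.symm q * (f.symm p * k + V) = 0 := by linear_combination h'
        have h2 := (mul_eq_zero.mp hz).resolve_left hfq0
        linear_combination h2
      have e1 : p * f (Q 0 0) + q * f (Q 1 0) = 0 := by
        have h := hent 0 0
        have hz : g * (p * f (Q 0 0) + q * f (Q 1 0)) = 0 := by
          linear_combination h + f (Q 0 0) * hgp + f (Q 1 0) * hgq
        exact (mul_eq_zero.mp hz).resolve_left hg
      have e2 : p * f (Q 0 1) + q * f (Q 1 1) = 0 := by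
        have h := hent 0 1
        have hz : g * (p * f (Q 0 1) + q * f (Q 1 1)) = 0 := by
          linear_combination h + f (Q 0 1) * hgp + f (Q 1 1) * hgq
        exact (mul_eq_zero.mp hz).resolve_left hg
      obtain ⟨k, hk1, hk2⟩ := step (Q 0 0) (Q 1 0) e1
      obtain ⟨k', hk1', hk2'⟩ := step (Q 0 1) (Q 1 1) e2
      have hkq : k * q = k' * p := by
        have hABpq : Q 0 0 * q = Q 0 1 * p := by rw [← hgp, ← hgq]; ring
        rw [hk1, hk1'] at hABpq
        exact mul_left_cancel₀ hfq0 (by linear_combination hABpq)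
      obtain ⟨ω, hw1, hw2⟩ : ∃ ω, k = ω * p ∧ k' = ω * q := by
        by_cases hp0 : p = 0
        · subst hp0
          have hqu : IsUnit q := hpq (dvd_zero q) dvd_rfl
          obtain ⟨u, rfl⟩ := hqu
          have hk0 : k = 0 := by
            have hz : k * (u : MvPolynomial (Fin m) R) = 0 := by
              simpa using hkq
            exact (mul_eq_zero.mp hz).resolve_right u.ne_zero
          refine ⟨k' * ↑u⁻¹, by simp [hk0], ?_⟩
          rw [mul_assoc]
          simp
        · obtain ⟨ω, hω⟩ :=
            hpq.dvd_of_dvd_mul_left (show p ∣ q * k from ⟨k', by linear_combination hkq⟩)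
          refine ⟨ω, by rw [hω]; ring, ?_⟩
          rw [hω] at hkq
          exact (mul_left_cancel₀ hp0 (by linear_combination hkq)).symm
      refine ⟨-ω, p, -q, hpq.neg_right, ?_⟩
      apply Matrix.ext; intro i j
      fin_cases i <;> fin_cases j <;>
        simp only [Matrix.smul_apply, smul_eq_mul, Matrix.cons_val', Matrix.cons_val_zero,
          Matrix.cons_val_one, Matrix.head_cons, Matrix.empty_val', Matrix.cons_val_fin_one,
          Matrix.head_fin_const, map_neg, Fin.isValue, Fin.mk_zero, Fin.mk_one, Matrix.of_apply]
      · rw [hk1, hw1]; ring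
      · rw [hk1', hw2]; ring
      · rw [hk2, hw1]; ring
      · rw [hk2', hw2]; ring
  · rintro ⟨ω, γ, δ, -, rfl⟩
    apply Matrix.ext; intro i j
    fin_cases i <;> fin_cases j <;>
      simp [Matrix.mul_apply, Fin.sum_univ_two, Matrix.map_apply, Matrix.smul_apply,
        smul_eq_mul, map_mul, map_neg] <;> ring
end
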